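/- arXiv:1804.05444 — 3 statements merged into one kernel-verified Lean document; each statement's English description precedes it below -/
import Mathlib

section
/- Let A be an N×N Hermitian positive definite complex matrix with smallest eigenvalue λ_min > 0 and largest eigenvalue λ_max. Then for every index n ∈ {1,…,N}, the n-th diagonal entry of A⁻¹ satisfies (A⁻¹)_{n,n} ≤ (1 / (4·A_{n,n})) · (λ_max/λ_min + λ_min/λ_max + 2), where A_{n,n} > 0 is the n-th diagonal entry of A. -/
/-!
Diagonalise `A = U diag(λ) Uᴴ`. Both `Aₙₙ = ∑ⱼ λⱼ |Uₙⱼ|²` and `(A⁻¹)ₙₙ = ∑ⱼ λⱼ⁻¹ |Uₙⱼ|²` are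
averages against the probability weights `|Uₙⱼ|²`, so the Kantorovich inequality bounds their
product by `(λ_min + λ_max)² / (4 λ_min λ_max)`. Kantorovich itself follows from the chord bound
`m M / x ≤ m + M - x` on `[m, M]` (that is, `(x - m) (M - x) ≥ 0`) together with
`a (m + M - a) ≤ (m + M)² / 4`.
-/

open Matrix ComplexOrder

theorem kantorovich_inequality {ι : Type*} (s : Finset ι) {w x : ι → ℝ} {m M : ℝ} (hm : 0 < m)
    (hw : ∀ i ∈ s, 0 ≤ w i) (hx : ∀ i ∈ s, x i ∈ Set.Icc m M) :
    4 * m * M * ((∑ i ∈ s, x i * w i) * ∑ i ∈ s, (x i)⁻¹ * w i) ≤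
      (m + M) ^ 2 * (∑ i ∈ s, w i) ^ 2 := by
  set a := ∑ i ∈ s, x i * w i
  set W := ∑ i ∈ s, w i
  have hpoint : ∀ i ∈ s, m * M * ((x i)⁻¹ * w i) ≤ (m + M) * w i - x i * w i := by
    intro i hi
    obtain ⟨hmx, hxM⟩ := hx i hi
    have hx0 : 0 < x i := hm.trans_le hmx
    rw [inv_mul_eq_div, ← mul_div_assoc, div_le_iff₀ hx0]
    nlinarith [mul_nonneg (hw i hi) (mul_nonneg (sub_nonneg.2 hmx) (sub_nonneg.2 hxM))]
  have hsum : m * M * ∑ i ∈ s, (x i)⁻¹ * w i ≤ (m + M) * W - a := by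
    rw [Finset.mul_sum, Finset.mul_sum, ← Finset.sum_sub_distrib]
    exact Finset.sum_le_sum hpoint
  have ha : 0 ≤ a := Finset.sum_nonneg fun i hi =>
    mul_nonneg (hm.le.trans (hx i hi).1) (hw i hi)
  nlinarith [mul_le_mul_of_nonneg_left hsum ha, sq_nonneg ((m + M) * W - 2 * a)]

namespace Matrix

variable {n 𝕜 : Type*} [Fintype n] [DecidableEq n] [RCLike 𝕜]

theorem mul_diagonal_mul_conjTranspose_apply_self (U : Matrix n n 𝕜) (d : n → ℝ) (i : n) :
    (U * diagonal (fun j => (d j : 𝕜)) * Uᴴ) i i = ((∑ j, d j * ‖U i j‖ ^ 2 : ℝ) : 𝕜) := by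
  simp only [mul_apply, diagonal_apply, mul_ite, mul_zero, Finset.sum_ite_eq',
    Finset.mem_univ, if_true, conjTranspose_apply, RCLike.star_def]
  push_cast
  refine Finset.sum_congr rfl fun j _ => ?_
  rw [← RCLike.mul_conj]
  ring

theorem sum_norm_sq_apply_of_mem_unitaryGroup {U : Matrix n n 𝕜} (hU : U ∈ unitaryGroup n 𝕜)
    (i : n) : ∑ j, ‖U i j‖ ^ 2 = 1 := by
  have h := mul_diagonal_mul_conjTranspose_apply_self U 1 i
  simp only [Pi.one_apply, RCLike.ofReal_one, diagonal_one, Matrix.mul_one, one_mul] at h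
  have hUU : U * Uᴴ = 1 := mem_unitaryGroup_iff.mp hU
  rw [hUU, one_apply_eq] at h
  exact_mod_cast h.symm

namespace IsHermitian

variable {A : Matrix n n 𝕜} (hA : A.IsHermitian)

theorem apply_self_eq (i : n) :
    A i i = ((∑ j, hA.eigenvalues j * ‖hA.eigenvectorUnitary i j‖ ^ 2 : ℝ) : 𝕜) := by
  conv_lhs => rw [hA.spectral_theorem]
  exact mul_diagonal_mul_conjTranspose_apply_self _ _ i

theorem inv_eq_conjStarAlgAut (h : ∀ j, hA.eigenvalues j ≠ 0) :
    A⁻¹ = Unitary.conjStarAlgAut 𝕜 _ hA.eigenvectorUnitary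
      (diagonal (RCLike.ofReal ∘ hA.eigenvalues⁻¹)) := by
  refine inv_eq_right_inv ((congrArg (· * _) hA.spectral_theorem).trans ?_)
  rw [← map_mul, diagonal_mul_diagonal]
  simp [h]

theorem inv_apply_self_eq (h : ∀ j, hA.eigenvalues j ≠ 0) (i : n) :
    A⁻¹ i i = ((∑ j, (hA.eigenvalues j)⁻¹ * ‖hA.eigenvectorUnitary i j‖ ^ 2 : ℝ) : 𝕜) := by
  rw [hA.inv_eq_conjStarAlgAut h]
  exact mul_diagonal_mul_conjTranspose_apply_self _ _ i

end IsHermitian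

end Matrix

theorem inv_diagonal_entry_bound_general (N : ℕ) (A : Matrix (Fin N) (Fin N) ℂ)
    (hA : A.PosDef) (lmin lmax : ℝ)
    (hmin : IsLeast (Set.range hA.isHermitian.eigenvalues) lmin)
    (hmax : IsGreatest (Set.range hA.isHermitian.eigenvalues) lmax)
    (n : Fin N) :
    ((A⁻¹) n n).re ≤ (1 / (4 * (A n n).re)) * (lmax / lmin + lmin / lmax + 2) := by
  set hH := hA.isHermitian
  have heig : ∀ j, hH.eigenvalues j ∈ Set.Icc lmin lmax := fun j =>
    ⟨hmin.2 ⟨j, rfl⟩, hmax.2 ⟨j, rfl⟩⟩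
  have hlmin : 0 < lmin := by
    obtain ⟨j, rfl⟩ := hmin.1
    exact hA.eigenvalues_pos j
  have hlmax : 0 < lmax := by
    obtain ⟨j, rfl⟩ := hmax.1
    exact hA.eigenvalues_pos j
  have ha : (A n n).re = ∑ j, hH.eigenvalues j * ‖hH.eigenvectorUnitary n j‖ ^ 2 := by
    rw [hH.apply_self_eq]
    exact Complex.ofReal_re _
  have hb : (A⁻¹ n n).re = ∑ j, (hH.eigenvalues j)⁻¹ * ‖hH.eigenvectorUnitary n j‖ ^ 2 := by
    rw [hH.inv_apply_self_eq (fun j => (hA.eigenvalues_pos j).ne')]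
    exact Complex.ofReal_re _
  have ha_pos : 0 < (A n n).re := (Complex.pos_iff.mp hA.diag_pos).1
  have key := kantorovich_inequality (w := fun j => ‖hH.eigenvectorUnitary n j‖ ^ 2) Finset.univ
    hlmin (fun j _ => by positivity) (fun j _ => heig j)
  rw [sum_norm_sq_apply_of_mem_unitaryGroup hH.eigenvectorUnitary.2, ← ha, ← hb] at key
  rw [show (1 / (4 * (A n n).re)) * (lmax / lmin + lmin / lmax + 2)
      = (lmin + lmax) ^ 2 / (4 * lmin * lmax * (A n n).re) by field_simp; ring,
    le_div_iff₀ (by positivity)]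
  linarith

/-- For an `N × N` Hermitian positive definite complex matrix `A` with smallest
eigenvalue `λ_min > 0` and largest eigenvalue `λ_max`, the `n`-th diagonal entry
of `A⁻¹` satisfies
`(A⁻¹)ₙₙ ≤ (1 / (4 Aₙₙ)) (λ_max/λ_min + λ_min/λ_max + 2)`. -/
theorem inv_diagonal_entry_bound (N : ℕ) (A : Matrix (Fin N) (Fin N) ℂ)
    (hA : A.PosDef) (lmin lmax : ℝ) (hlmin : 0 < lmin)
    (hmin : IsLeast (Set.range hA.isHermitian.eigenvalues) lmin)
    (hmax : IsGreatest (Set.range hA.isHermitian.eigenvalues) lmax)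
    (n : Fin N) (hdiag : 0 < (A n n).re) :
    ((A⁻¹) n n).re ≤ (1 / (4 * (A n n).re)) * (lmax / lmin + lmin / lmax + 2) :=
  inv_diagonal_entry_bound_general N A hA lmin lmax hmin hmax n
end

section
/- Let N ≥ 1, fix n ∈ {1,…,N}, and let v, w ∈ ℂ^N be unit vectors with v* w = 0. Let ρ ∈ ℝ with 0 ≤ ρ ≤ 1, let c be a nonzero complex number, and set g = ρ v + √(1 − ρ²) w. Let f¹, …, f^N ∈ ℂ^N be vectors satisfying: v* f^ℓ = 0 for all ℓ ≠ n, |v* f^n| = 1, and w* f^n = 0. Let m ≥ 1 and let P_{n,1}, …, P_{n,m} ≥ 0 with P_{n,m} > 0; let P_c ≥ 0 and, for each ℓ ≠ n, let P_{ℓ,1}, …, P_{ℓ,M} ≥ 0 with Σ_{q=1}^{M} P_{ℓ,q} = P_c. Let B ∈ ℂ^{N×(N−1)} be the matrix whose columns are the f^ℓ for ℓ ≠ n, and let λ_max denote the largest eigenvalue of B B*. Then log₂(1 + P_{n,m} |c|² |g* f^n|² / (Σ_{k=1}^{m−1} P_{n,k} |c|² |g* f^n|² + Σ_{ℓ≠n}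 Σ_{q=1}^{M} P_{ℓ,q} |c|² |g* f^ℓ|² + 1)) ≥ log₂(1 + P_{n,m} ρ² |c|² / (Σ_{k=1}^{m−1} P_{n,k} ρ² |c|² + P_c (1 − ρ²) |c|² λ_max + 1)). -/
open Matrix

/-!
Because `w ⟂ fⁿ` and `v ⟂ fˡ` for `ℓ ≠ n`, the gain of `g` on `fⁿ` is exactly `ρ²` and its gain
on `fˡ` is `(1 - ρ²)|w* fˡ|²`. Summed over `ℓ ≠ n` the latter gains give `‖B* w‖² = w* (B B*) w`,
which is at most `λ_max` because `B B* ≤ λ_max • 1` in the Loewner order and `w` is a unit vector.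
Hence the true interference is at most the one in the bound, and `x ↦ log₂ (1 + a / x)` is
antitone.
-/

namespace Matrix

variable {𝕜 m n : Type*} [RCLike 𝕜] [Fintype m] [Fintype n]

lemma star_dotProduct_self (x : n → 𝕜) : star x ⬝ᵥ x = ((∑ i, ‖x i‖ ^ 2 : ℝ) : 𝕜) := by
  simp only [dotProduct, Pi.star_apply, RCLike.star_def, RCLike.conj_mul]
  push_cast
  rfl

open scoped MatrixOrder in
lemma IsHermitian.re_dotProduct_mulVec_le [DecidableEq n] {A : Matrix n n 𝕜}
    (hA : A.IsHermitian) {r : ℝ} (hr : ∀ i, hA.eigenvalues i ≤ r) (x : n → 𝕜) :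
    RCLike.re (star x ⬝ᵥ A *ᵥ x) ≤ r * ∑ i, ‖x i‖ ^ 2 := by
  have hle : A ≤ algebraMap ℝ _ r := by
    refine le_algebraMap_of_spectrum_le ?_ hA.isSelfAdjoint
    rw [hA.spectrum_real_eq_range_eigenvalues]
    rintro _ ⟨i, rfl⟩
    exact hr i
  have := (le_iff.mp hle).re_dotProduct_nonneg x
  rw [sub_mulVec, dotProduct_sub, map_sub, Algebra.algebraMap_eq_smul_one, smul_mulVec,
    one_mulVec, dotProduct_smul, star_dotProduct_self, RCLike.real_smul_eq_coe_mul,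
    ← RCLike.ofReal_mul, RCLike.ofReal_re] at this
  linarith

lemma sum_norm_sq_star_dotProduct_transpose (B : Matrix m n 𝕜) (x : m → 𝕜) :
    ∑ j, ‖star x ⬝ᵥ Bᵀ j‖ ^ 2 = RCLike.re (star x ⬝ᵥ (B * Bᴴ) *ᵥ x) := by
  have hcol : ∀ j, star x ⬝ᵥ Bᵀ j = star ((Bᴴ *ᵥ x) j) := by
    intro j
    simp [mulVec, dotProduct, conjTranspose_apply, mul_comm]
  have hvec : star x ᵥ* B = star (Bᴴ *ᵥ x) := by
    rw [star_mulVec, conjTranspose_conjTranspose]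
  rw [← mulVec_mulVec, dotProduct_mulVec, hvec, star_dotProduct_self, RCLike.ofReal_re]
  simp [hcol]

lemma sum_norm_sq_star_dotProduct_transpose_le [DecidableEq m] (B : Matrix m n 𝕜) {r : ℝ}
    (hr : ∀ i, (isHermitian_mul_conjTranspose_self B).eigenvalues i ≤ r) (x : m → 𝕜) :
    ∑ j, ‖star x ⬝ᵥ Bᵀ j‖ ^ 2 ≤ r * ∑ i, ‖x i‖ ^ 2 := by
  rw [sum_norm_sq_star_dotProduct_transpose]
  exact (isHermitian_mul_conjTranspose_self B).re_dotProduct_mulVec_le hr x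

lemma star_ofReal_smul_add_dotProduct (a b : ℝ) (v w x : n → ℂ) :
    star ((a : ℂ) • v + (b : ℂ) • w) ⬝ᵥ x = a * (star v ⬝ᵥ x) + b * (star w ⬝ᵥ x) := by
  simp [add_dotProduct, smul_dotProduct]

lemma norm_sq_star_ofReal_smul_add_dotProduct_of_right {w x : n → ℂ} (a b : ℝ) (v : n → ℂ)
    (hwx : star w ⬝ᵥ x = 0) :
    ‖star ((a : ℂ) • v + (b : ℂ) • w) ⬝ᵥ x‖ ^ 2 = a ^ 2 * ‖star v ⬝ᵥ x‖ ^ 2 := by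
  rw [star_ofReal_smul_add_dotProduct, hwx, mul_zero, add_zero, norm_mul, mul_pow,
    Complex.norm_real, Real.norm_eq_abs, sq_abs]

lemma norm_sq_star_ofReal_smul_add_dotProduct_of_left {v x : n → ℂ} (a b : ℝ) (w : n → ℂ)
    (hvx : star v ⬝ᵥ x = 0) :
    ‖star ((a : ℂ) • v + (b : ℂ) • w) ⬝ᵥ x‖ ^ 2 = b ^ 2 * ‖star w ⬝ᵥ x‖ ^ 2 := by
  rw [star_ofReal_smul_add_dotProduct, hvx, mul_zero, zero_add, norm_mul, mul_pow,
    Complex.norm_real, Real.norm_eq_abs, sq_abs]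

end Matrix

lemma Real.logb_one_add_div_le_logb_one_add_div {b a D E : ℝ} (hb : 1 < b) (ha : 0 ≤ a)
    (hD : 0 < D) (hDE : D ≤ E) : Real.logb b (1 + a / E) ≤ Real.logb b (1 + a / D) := by
  have hE : 0 < E := hD.trans_le hDE
  exact Real.logb_le_logb_of_le hb (by positivity) (by gcongr)

theorem rate_lower_bound_imperfect_correlation_general (N M : ℕ) (n : Fin N)
    (v w : Fin N → ℂ)
    (hw : ∑ i, ‖w i‖ ^ 2 = 1)
    (ρ : ℝ) (hρ0 : 0 ≤ ρ) (hρ1 : ρ ≤ 1) (c : ℂ)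
    (g : Fin N → ℂ) (hg : g = (ρ : ℂ) • v + ((Real.sqrt (1 - ρ ^ 2) : ℝ) : ℂ) • w)
    (f : Fin N → Fin N → ℂ)
    (hfv : ∀ ℓ, ℓ ≠ n → star v ⬝ᵥ f ℓ = 0)
    (hfn : ‖star v ⬝ᵥ f n‖ = 1)
    (hwfn : star w ⬝ᵥ f n = 0)
    (m : ℕ) (P : Fin N → ℕ → ℝ)
    (hPn : ∀ k ∈ Finset.Icc 1 m, 0 ≤ P n k) (hPm : 0 < P n m)
    (Pc : ℝ) (hPc : 0 ≤ Pc)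
    (hPsum : ∀ ℓ, ℓ ≠ n → ∑ q ∈ Finset.Icc 1 M, P ℓ q = Pc)
    (B : Matrix (Fin N) {ℓ : Fin N // ℓ ≠ n} ℂ)
    (hB : ∀ (ℓ : {ℓ : Fin N // ℓ ≠ n}) (i : Fin N), B i ℓ = f ℓ.1 i)
    (lammax : ℝ)
    (hlam : IsGreatest
      (Set.range (Matrix.isHermitian_mul_conjTranspose_self B).eigenvalues) lammax) :
    Real.logb 2 (1 + P n m * ‖c‖ ^ 2 * ‖star g ⬝ᵥ f n‖ ^ 2 /
        ((∑ k ∈ Finset.Ico 1 m, P n k * ‖c‖ ^ 2 * ‖star g ⬝ᵥ f n‖ ^ 2)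
          + (∑ ℓ ∈ Finset.univ.erase n, ∑ q ∈ Finset.Icc 1 M,
              P ℓ q * ‖c‖ ^ 2 * ‖star g ⬝ᵥ f ℓ‖ ^ 2) + 1))
      ≥ Real.logb 2 (1 + P n m * ρ ^ 2 * ‖c‖ ^ 2 /
        ((∑ k ∈ Finset.Ico 1 m, P n k * ρ ^ 2 * ‖c‖ ^ 2)
          + Pc * (1 - ρ ^ 2) * ‖c‖ ^ 2 * lammax + 1)) := by
  have h1ρ : 0 ≤ 1 - ρ ^ 2 := by nlinarith
  have hgn : ‖star g ⬝ᵥ f n‖ ^ 2 = ρ ^ 2 := by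
    rw [hg, norm_sq_star_ofReal_smul_add_dotProduct_of_right _ _ _ hwfn, hfn, one_pow, mul_one]
  have hray : ∑ ℓ ∈ Finset.univ.erase n, ‖star w ⬝ᵥ f ℓ‖ ^ 2 ≤ lammax := by
    have hcol : ∀ ℓ : {ℓ : Fin N // ℓ ≠ n}, Bᵀ ℓ = f ℓ := fun ℓ => funext (hB ℓ)
    rw [Finset.sum_subtype _ (p := (· ≠ n)) (by simp)]
    simpa only [hcol, hw, mul_one] using
      B.sum_norm_sq_star_dotProduct_transpose_le (fun i => hlam.2 ⟨i, rfl⟩) w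
  have hI : ∑ ℓ ∈ Finset.univ.erase n, ∑ q ∈ Finset.Icc 1 M,
        P ℓ q * ‖c‖ ^ 2 * ‖star g ⬝ᵥ f ℓ‖ ^ 2
      = Pc * (1 - ρ ^ 2) * ‖c‖ ^ 2 * ∑ ℓ ∈ Finset.univ.erase n, ‖star w ⬝ᵥ f ℓ‖ ^ 2 := by
    rw [Finset.mul_sum]
    refine Finset.sum_congr rfl fun ℓ hℓ => ?_
    rw [← Finset.sum_mul, ← Finset.sum_mul, hPsum ℓ (Finset.ne_of_mem_erase hℓ), hg,
      norm_sq_star_ofReal_smul_add_dotProduct_of_left _ _ _ (hfv ℓ (Finset.ne_of_mem_erase hℓ)),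
      Real.sq_sqrt h1ρ]
    ring
  have hS : 0 ≤ ∑ k ∈ Finset.Ico 1 m, P n k * ρ ^ 2 * ‖c‖ ^ 2 := Finset.sum_nonneg fun k hk =>
    mul_nonneg (mul_nonneg (hPn k (Finset.Ico_subset_Icc_self hk)) (sq_nonneg _)) (sq_nonneg _)
  have hX : 0 ≤ Pc * (1 - ρ ^ 2) * ‖c‖ ^ 2 := mul_nonneg (mul_nonneg hPc h1ρ) (sq_nonneg _)
  rw [hgn, hI]
  simp_rw [mul_right_comm _ (‖c‖ ^ 2) (ρ ^ 2)]
  apply Real.logb_one_add_div_le_logb_one_add_div one_lt_two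
  · exact mul_nonneg (mul_nonneg hPm.le (sq_nonneg _)) (sq_nonneg _)
  · exact add_pos_of_nonneg_of_pos (add_nonneg hS (mul_nonneg hX
      (Finset.sum_nonneg fun ℓ _ => sq_nonneg _))) one_pos
  · gcongr

/-- Core inequality of Theorem 2 of the paper (imperfect correlation): the
achievable rate (after SIC) of user `(n,m)`, whose normalized effective channel
is `g = ρ v + √(1 − ρ²) w` with `c g*` the effective channel, is lower bounded
using `|g* fⁿ|² = ρ²`, `|g* fˡ|² = (1 − ρ²)|w* fˡ|²` for `ℓ ≠ n`, and
`Σ_{ℓ≠n} |w* fˡ|² ≤ λ_max(B B*)`. -/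
theorem rate_lower_bound_imperfect_correlation (N M : ℕ) (n : Fin N)
    (v w : Fin N → ℂ)
    (hv : ∑ i, ‖v i‖ ^ 2 = 1) (hw : ∑ i, ‖w i‖ ^ 2 = 1)
    (hvw : star v ⬝ᵥ w = 0)
    (ρ : ℝ) (hρ0 : 0 ≤ ρ) (hρ1 : ρ ≤ 1) (c : ℂ) (hc : c ≠ 0)
    (g : Fin N → ℂ) (hg : g = (ρ : ℂ) • v + ((Real.sqrt (1 - ρ ^ 2) : ℝ) : ℂ) • w)
    (f : Fin N → Fin N → ℂ)
    (hfv : ∀ ℓ, ℓ ≠ n → star v ⬝ᵥ f ℓ = 0)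
    (hfn : ‖star v ⬝ᵥ f n‖ = 1)
    (hwfn : star w ⬝ᵥ f n = 0)
    (m : ℕ) (hm : 1 ≤ m) (P : Fin N → ℕ → ℝ)
    (hPn : ∀ k ∈ Finset.Icc 1 m, 0 ≤ P n k) (hPm : 0 < P n m)
    (Pc : ℝ) (hPc : 0 ≤ Pc)
    (hPq : ∀ ℓ, ℓ ≠ n → ∀ q ∈ Finset.Icc 1 M, 0 ≤ P ℓ q)
    (hPsum : ∀ ℓ, ℓ ≠ n → ∑ q ∈ Finset.Icc 1 M, P ℓ q = Pc)
    (B : Matrix (Fin N) {ℓ : Fin N // ℓ ≠ n} ℂ)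
    (hB : ∀ (ℓ : {ℓ : Fin N // ℓ ≠ n}) (i : Fin N), B i ℓ = f ℓ.1 i)
    (lammax : ℝ)
    (hlam : IsGreatest
      (Set.range (Matrix.isHermitian_mul_conjTranspose_self B).eigenvalues) lammax) :
    Real.logb 2 (1 + P n m * ‖c‖ ^ 2 * ‖star g ⬝ᵥ f n‖ ^ 2 /
        ((∑ k ∈ Finset.Ico 1 m, P n k * ‖c‖ ^ 2 * ‖star g ⬝ᵥ f n‖ ^ 2)
          + (∑ ℓ ∈ Finset.univ.erase n, ∑ q ∈ Finset.Icc 1 M,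
              P ℓ q * ‖c‖ ^ 2 * ‖star g ⬝ᵥ f ℓ‖ ^ 2) + 1))
      ≥ Real.logb 2 (1 + P n m * ρ ^ 2 * ‖c‖ ^ 2 /
        ((∑ k ∈ Finset.Ico 1 m, P n k * ρ ^ 2 * ‖c‖ ^ 2)
          + Pc * (1 - ρ ^ 2) * ‖c‖ ^ 2 * lammax + 1)) :=
  rate_lower_bound_imperfect_correlation_general N M n v w hw ρ hρ0 hρ1 c g hg f hfv hfn hwfn m P
    hPn hPm Pc hPc hPsum B hB lammax hlam
end

section
/- Let T > 0 and N ≥ 1 be given, let F ∈ ℂ^{T_B×N} have full column rank with Gram matrix G = F* F (so G is Hermitian positive definite), let τ > 0 be a real number, let D = diag(β_1, …, β_N) with every β_n ≠ 0, and set H̄ = √τ · D · G. Let Λ be the diagonal matrix with Λ_{n,n} = √(τ |β_n|² / (G⁻¹)_{n,n}) and define F_BB = H̄* (H̄ H̄*)⁻¹ Λ with columns f¹, …, f^N. Then for every n, ‖F f^n‖² = 1, and consequently ‖F F_BB‖_F² = N. -/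
open Matrix ComplexOrder

/-!
Since `H̄ = diag(√τ β) G` is square and invertible, `F_BB = H̄⁻¹ Λ = G⁻¹ diag(w)` with
`w_n = Λ_{n,n} / (√τ β_n)`. The Gram matrix of `F G⁻¹` is `G⁻¹ (F* F) G⁻¹ = G⁻¹`, so the
`n`-th column of `F F_BB` has squared norm `|w_n|² (G⁻¹)_{n,n}`, and `Λ` is chosen to make
this `1`.
-/

namespace Matrix

variable {m n 𝕜 : Type*}

theorem conjTranspose_mul_inv_mul_conjTranspose [Fintype n] [DecidableEq n] [CommRing 𝕜]
    [StarRing 𝕜] {A : Matrix n n 𝕜} (hA : IsUnit A.det) : Aᴴ * (A * Aᴴ)⁻¹ = A⁻¹ := by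
  have hAH : IsUnit Aᴴ.det := by rw [det_conjTranspose]; exact hA.star
  rw [Matrix.mul_inv_rev, ← Matrix.mul_assoc, mul_nonsing_inv _ hAH, Matrix.one_mul]

theorem inv_diagonal_mul [Fintype n] [DecidableEq n] [Field 𝕜] {d : n → 𝕜}
    (hd : ∀ k, d k ≠ 0) (A : Matrix n n 𝕜) : (diagonal d * A)⁻¹ = A⁻¹ * diagonal d⁻¹ := by
  have hdiag : diagonal d⁻¹ * diagonal d = 1 := by
    rw [diagonal_mul_diagonal, ← diagonal_one]
    exact congrArg diagonal (funext fun k => inv_mul_cancel₀ (hd k))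
  rw [Matrix.mul_inv_rev, inv_eq_left_inv hdiag]

theorem sum_norm_sq_mul_diagonal_apply [Fintype m] [Fintype n] [DecidableEq n]
    [NormedDivisionRing 𝕜] (A : Matrix m n 𝕜) (w : n → 𝕜) (k : n) :
    ∑ i, ‖(A * diagonal w) i k‖ ^ 2 = ‖w k‖ ^ 2 * ∑ i, ‖A i k‖ ^ 2 := by
  simp only [mul_diagonal, norm_mul, mul_pow, Finset.mul_sum]
  exact Finset.sum_congr rfl fun i _ => mul_comm _ _

theorem sum_norm_sq_apply_eq_re_conjTranspose_mul_self [Fintype m] [RCLike 𝕜]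
    (A : Matrix m n 𝕜) (k : n) :
    ∑ i, ‖A i k‖ ^ 2 = RCLike.re ((Aᴴ * A) k k) := by
  simp only [mul_apply, conjTranspose_apply, RCLike.star_def, RCLike.conj_mul, map_sum]
  norm_cast

theorem conjTranspose_mul_self_of_mul_inv_gram [Fintype m] [Fintype n] [DecidableEq n]
    [CommRing 𝕜] [StarRing 𝕜] (F : Matrix m n 𝕜) (hF : IsUnit (Fᴴ * F).det) :
    (F * (Fᴴ * F)⁻¹)ᴴ * (F * (Fᴴ * F)⁻¹) = (Fᴴ * F)⁻¹ := by
  rw [conjTranspose_mul, conjTranspose_nonsing_inv, (isHermitian_conjTranspose_mul_self F).eq,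
    Matrix.mul_assoc, ← Matrix.mul_assoc Fᴴ, ← Matrix.mul_assoc, nonsing_inv_mul _ hF,
    Matrix.one_mul]

end Matrix

theorem norm_sq_inv_mul_sqrt_mul_eq_one {τ g : ℝ} (hτ : 0 < τ) (hg : 0 < g) {b : ℂ} (hb : b ≠ 0) :
    ‖((Real.sqrt τ : ℂ) * b)⁻¹ * ((Real.sqrt (τ * ‖b‖ ^ 2 / g) : ℝ) : ℂ)‖ ^ 2 * g = 1 := by
  have hb' : 0 < ‖b‖ := norm_pos_iff.mpr hb
  rw [norm_mul, norm_inv, norm_mul, Complex.norm_real, Complex.norm_real,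
    Real.norm_of_nonneg (Real.sqrt_nonneg _), Real.norm_of_nonneg (Real.sqrt_nonneg _), mul_pow,
    inv_pow, mul_pow, Real.sq_sqrt hτ.le, Real.sq_sqrt (by positivity)]
  field_simp

theorem hybrid_precoder_power_constraint_general (TB N : ℕ)
    (F : Matrix (Fin TB) (Fin N) ℂ)
    (G : Matrix (Fin N) (Fin N) ℂ) (hGdef : G = Fᴴ * F) (hG : G.PosDef)
    (τ : ℝ) (hτ : 0 < τ) (β : Fin N → ℂ) (hβ : ∀ k, β k ≠ 0)
    (Hbar : Matrix (Fin N) (Fin N) ℂ)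
    (hHbar : Hbar = ((Real.sqrt τ : ℝ) : ℂ) • (Matrix.diagonal β * G))
    (Λ : Matrix (Fin N) (Fin N) ℂ)
    (hΛ : Λ = Matrix.diagonal fun k =>
      ((Real.sqrt (τ * ‖β k‖ ^ 2 / ((G⁻¹) k k).re) : ℝ) : ℂ))
    (FBB : Matrix (Fin N) (Fin N) ℂ)
    (hFBB : FBB = Hbarᴴ * (Hbar * Hbarᴴ)⁻¹ * Λ) :
    (∀ k : Fin N, ∑ t, ‖(F * FBB) t k‖ ^ 2 = 1) ∧
      ∑ t, ∑ k, ‖(F * FBB) t k‖ ^ 2 = (N : ℝ) := by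
  have hGunit : IsUnit G.det := (isUnit_iff_isUnit_det G).mp hG.isUnit
  have hHbar' : Hbar = diagonal (fun k => (Real.sqrt τ : ℂ) * β k) * G := by
    rw [hHbar, ← Matrix.smul_mul, ← diagonal_smul]; rfl
  have hd : ∀ k, (Real.sqrt τ : ℂ) * β k ≠ 0 := fun k =>
    mul_ne_zero (by exact_mod_cast (Real.sqrt_pos.mpr hτ).ne') (hβ k)
  have hHunit : IsUnit Hbar.det := by
    rw [hHbar', det_mul, det_diagonal]
    exact (isUnit_iff_ne_zero.mpr (Finset.prod_ne_zero_iff.mpr fun k _ => hd k)).mul hGunit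
  have hcol : ∀ k : Fin N, ∑ t, ‖(F * FBB) t k‖ ^ 2 = 1 := by
    intro k
    have hg : 0 < ((G⁻¹) k k).re := (Complex.pos_iff.mp hG.inv.diag_pos).1
    rw [hFBB, conjTranspose_mul_inv_mul_conjTranspose hHunit, hHbar', inv_diagonal_mul hd, hΛ,
      Matrix.mul_assoc, diagonal_mul_diagonal, ← Matrix.mul_assoc,
      sum_norm_sq_mul_diagonal_apply, sum_norm_sq_apply_eq_re_conjTranspose_mul_self, hGdef,
      conjTranspose_mul_self_of_mul_inv_gram F (hGdef ▸ hGunit), ← hGdef]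
    exact norm_sq_inv_mul_sqrt_mul_eq_one hτ hg (hβ k)
  refine ⟨hcol, ?_⟩
  rw [Finset.sum_comm]
  simp [hcol]

/-- Power normalization of the hybrid precoder: with `G = F* F` positive
definite, `H̄ = √τ D G`, `Λ_{n,n} = √(τ |β_n|² / (G⁻¹)_{n,n})` and
`F_BB = H̄* (H̄ H̄*)⁻¹ Λ`, every effective column has unit power,
`‖F fⁿ‖² = 1`, and hence `‖F F_BB‖_F² = N`. -/
theorem hybrid_precoder_power_constraint (TB N : ℕ) (hTB : 0 < TB) (hN : 1 ≤ N)
    (F : Matrix (Fin TB) (Fin N) ℂ) (hrank : F.rank = N)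
    (G : Matrix (Fin N) (Fin N) ℂ) (hGdef : G = Fᴴ * F) (hG : G.PosDef)
    (τ : ℝ) (hτ : 0 < τ) (β : Fin N → ℂ) (hβ : ∀ k, β k ≠ 0)
    (Hbar : Matrix (Fin N) (Fin N) ℂ)
    (hHbar : Hbar = ((Real.sqrt τ : ℝ) : ℂ) • (Matrix.diagonal β * G))
    (Λ : Matrix (Fin N) (Fin N) ℂ)
    (hΛ : Λ = Matrix.diagonal fun k =>
      ((Real.sqrt (τ * ‖β k‖ ^ 2 / ((G⁻¹) k k).re) : ℝ) : ℂ))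
    (FBB : Matrix (Fin N) (Fin N) ℂ)
    (hFBB : FBB = Hbarᴴ * (Hbar * Hbarᴴ)⁻¹ * Λ) :
    (∀ k : Fin N, ∑ t, ‖(F * FBB) t k‖ ^ 2 = 1) ∧
      ∑ t, ∑ k, ‖(F * FBB) t k‖ ^ 2 = (N : ℝ) :=
  hybrid_precoder_power_constraint_general TB N F G hGdef hG τ hτ β hβ Hbar hHbar Λ hΛ FBB hFBB
end
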